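/- Let D = (V, A) be a finite digraph with at least one arc, and let φ(D) be the bipartite graph with parts V_s = {v_s : v ∈ V} and V_p = {v_p : v ∈ V} and edge set {(u_s, v_p) : (u,v) ∈ A}. Then r(φ(D)) ≤ r(D) − 1; in particular r(φ(D)) < r(D). -/

import Mathlib

/-!
If `ℓ` is an injective overlap labeling of `D` of length `r`, labeling `u_s` by `ℓ u` without its
first letter and `v_p` by `ℓ v` without its last letter gives an overlap labeling of `φ(D)` of
length `r - 1`: the overlaps that survive are exactly those of length `< r`, i.e. the arcs of `D`.
What remains is that `r(D)` is finite (otherwise it would be `sInf ∅ = 0`): every finite digraph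
has an injective overlap labeling.

For that, number the vertices and give each arc `(u, v)` the word
`w(u, v) = w(u', v) ++ c(u, v) ++ w(u, v')`, with a fresh letter `c(u, v)`, where `u'` is the
previous in-neighbour of `v` and `v'` the previous out-neighbour of `u`. The words of the arcs into
`v` then form a prefix chain and those out of `u` a suffix chain; the label of `v` is the longest
word into `v`, a separator, and the longest word out of `v`, padded to a common length.
Conversely, in all these words a letter `c(a, b)` is followed by at least the tail of `w(a, b)`
after it, so a common suffix-prefix of the out-part of `u` and the in-part of `v` is a whole word
`w(a, v)`; its last letter lies in row `a`, which forces `a = u`.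
-/

namespace Readability

/-- `x` overlaps `y` by `i`: `1 ≤ i ≤ min |x| |y|` and the length-`i` suffix of `x`
equals the length-`i` prefix of `y`. -/
def OverlapsBy {α : Type*} (x y : List α) (i : ℕ) : Prop :=
  1 ≤ i ∧ i ≤ min x.length y.length ∧ x.drop (x.length - i) = y.take i

/-- `ov x y`: the minimum `i` such that `x` overlaps `y` by `i`, or `0` if none exists. -/
noncomputable def ov {α : Type*} (x y : List α) : ℕ := sInf {i | OverlapsBy x y i}

/-- An overlap labeling of length `r` of the bipartite graph with parts `Vs`, `Vp` and
edge relation `E ⊆ Vs × Vp`. -/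
def IsOverlapLabeling {α Vs Vp : Type*} (E : Vs → Vp → Prop) (r : ℕ)
    (ls : Vs → List α) (lp : Vp → List α) : Prop :=
  (∀ u, (ls u).length = r) ∧ (∀ v, (lp v).length = r) ∧
    ∀ u v, E u v ↔ ∃ i, OverlapsBy (ls u) (lp v) i

/-- Bipartite readability: the least `r` admitting an overlap labeling of length `r`
(over the alphabet `ℕ`). -/
noncomputable def bReadability {Vs Vp : Type*} (E : Vs → Vp → Prop) : ℕ :=
  sInf {r | ∃ (ls : Vs → List ℕ) (lp : Vp → List ℕ), IsOverlapLabeling E r ls lp}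

/-- An injective overlap labeling of length `r` of the digraph with arc relation `A`. -/
def IsInjOverlapLabeling {V : Type*} (A : V → V → Prop) (r : ℕ) (ℓ : V → List ℕ) : Prop :=
  (∀ v, (ℓ v).length = r) ∧ Function.Injective ℓ ∧
    ∀ u v, A u v ↔ 0 < ov (ℓ u) (ℓ v) ∧ ov (ℓ u) (ℓ v) < r

/-- Digraph readability: the least `r` admitting an injective overlap labeling of length `r`. -/
noncomputable def dReadability {V : Type*} (A : V → V → Prop) : ℕ :=
  sInf {r | ∃ ℓ : V → List ℕ, IsInjOverlapLabeling A r ℓ}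

/-- A decomposition of size `k`: a weight function on edges with values in `{1,…,k}`. -/
def IsDecomposition {Vs Vp : Type*} (E : Vs → Vp → Prop) (k : ℕ) (w : Vs → Vp → ℕ) : Prop :=
  ∀ u v, E u v → 1 ≤ w u v ∧ w u v ≤ k

/-- An induced `P₄` with consecutive edges `(s1,p1), (s2,p1), (s2,p2)`. -/
def InducedP4 {Vs Vp : Type*} (E : Vs → Vp → Prop) (s1 s2 : Vs) (p1 p2 : Vp) : Prop :=
  s1 ≠ s2 ∧ p1 ≠ p2 ∧ E s1 p1 ∧ E s2 p1 ∧ E s2 p2 ∧ ¬ E s1 p2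

/-- The `P₄`-rule: on each induced `P₄`, if the middle edge has maximum weight then its weight
is at least the sum of the weights of the two outer edges. -/
def SatisfiesP4Rule {Vs Vp : Type*} (E : Vs → Vp → Prop) (w : Vs → Vp → ℕ) : Prop :=
  ∀ s1 s2 p1 p2, InducedP4 E s1 s2 p1 p2 →
    w s2 p1 = max (w s1 p1) (max (w s2 p1) (w s2 p2)) →
    w s1 p1 + w s2 p2 ≤ w s2 p1

/-- The strict `P₄`-rule: as the `P₄`-rule, with strict inequality. -/
def SatisfiesStrictP4Rule {Vs Vp : Type*} (E : Vs → Vp → Prop) (w : Vs → Vp → ℕ) : Prop :=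
  ∀ s1 s2 p1 p2, InducedP4 E s1 s2 p1 p2 →
    w s2 p1 = max (w s1 p1) (max (w s2 p1) (w s2 p2)) →
    w s1 p1 + w s2 p2 < w s2 p1

/-- `C₄`-freeness of a bipartite graph. -/
def C4Free {Vs Vp : Type*} (E : Vs → Vp → Prop) : Prop :=
  ∀ (s1 s2 : Vs) (p1 p2 : Vp), s1 ≠ s2 → p1 ≠ p2 →
    ¬ (E s1 p1 ∧ E s1 p2 ∧ E s2 p1 ∧ E s2 p2)

/-- The subgraph `G_i` of a decomposition: edges of weight exactly `i`. -/
def SubAt {Vs Vp : Type*} (E : Vs → Vp → Prop) (w : Vs → Vp → ℕ) (i : ℕ) :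
    Vs → Vp → Prop :=
  fun u v => E u v ∧ w u v = i

/-- A bipartite edge relation is a disjoint union of bicliques iff it has no induced `P₄`,
i.e. whenever `(s1,p1), (s2,p1), (s2,p2)` are edges, so is `(s1,p2)`. -/
def BicliqueUnion {Vs Vp : Type*} (H : Vs → Vp → Prop) : Prop :=
  ∀ s1 s2 p1 p2, H s1 p1 → H s2 p1 → H s2 p2 → H s1 p2

/-- The HUB-rule for a decomposition `w`:
(i) every level graph `G_i` is a disjoint union of bicliques, and
(ii) non-isolated twins in `G_i` (for `i ≥ 2`) are twins in every `G_j` with `1 ≤ j ≤ i-1`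
(stated for both parts of the bipartition). -/
def SatisfiesHUBRule {Vs Vp : Type*} (E : Vs → Vp → Prop) (w : Vs → Vp → ℕ) : Prop :=
  (∀ i, 1 ≤ i → BicliqueUnion (SubAt E w i)) ∧
  (∀ i, 2 ≤ i → ∀ u v : Vs, u ≠ v → (∃ p, SubAt E w i u p) →
      (∀ p, SubAt E w i u p ↔ SubAt E w i v p) →
      ∀ j, 1 ≤ j → j ≤ i - 1 → ∀ p, SubAt E w j u p ↔ SubAt E w j v p) ∧
  (∀ i, 2 ≤ i → ∀ u v : Vp, u ≠ v → (∃ s, SubAt E w i s u) →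
      (∀ s, SubAt E w i s u ↔ SubAt E w i s v) →
      ∀ j, 1 ≤ j → j ≤ i - 1 → ∀ s, SubAt E w j s u ↔ SubAt E w j s v)

/-- The HUB number: minimum size of a decomposition satisfying the HUB-rule. -/
noncomputable def hubNumber {Vs Vp : Type*} (E : Vs → Vp → Prop) : ℕ :=
  sInf {k | ∃ w, IsDecomposition E k w ∧ SatisfiesHUBRule E w}

/-- The underlying undirected simple graph on `Vs ⊕ Vp` of a bipartite graph. -/
def underlyingGraph {Vs Vp : Type*} (E : Vs → Vp → Prop) : SimpleGraph (Vs ⊕ Vp) where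
  Adj x y := (∃ u v, x = Sum.inl u ∧ y = Sum.inr v ∧ E u v) ∨
    (∃ u v, x = Sum.inr v ∧ y = Sum.inl u ∧ E u v)
  symm := by
    constructor
    rintro x y (⟨u, v, rfl, rfl, h⟩ | ⟨u, v, rfl, rfl, h⟩)
    · exact Or.inr ⟨u, v, rfl, rfl, h⟩
    · exact Or.inl ⟨u, v, rfl, rfl, h⟩
  loopless := by
    constructor
    rintro x (⟨u, v, h1, h2, -⟩ | ⟨u, v, h1, h2, -⟩) <;> subst h1 <;> simp_all

/-- The radius of a graph: the least `r` such that some vertex has eccentricity at most `r`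
(for a finite connected graph this is `min_u max_v dist(u,v)`). -/
noncomputable def graphRadius {V : Type*} (G : SimpleGraph V) : ℕ :=
  sInf {r | ∃ u, ∀ v, G.dist u v ≤ r}

/-- Distinctness of two vertices `u, v` of the same part (here the `Vs`-part, with
neighborhoods taken in `Vp`): `max(|N(u)∖N(v)|, |N(v)∖N(u)|)`. -/
noncomputable def DTpair {Vs Vp : Type*} (E : Vs → Vp → Prop) (u v : Vs) : ℕ :=
  max {p : Vp | E u p ∧ ¬ E v p}.ncard {p : Vp | E v p ∧ ¬ E u p}.ncard

/-- Distinctness of a bipartite graph: the minimum of `DT(u,v)` over pairs of distinct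
vertices in the same part. -/
noncomputable def distinctness {Vs Vp : Type*} (E : Vs → Vp → Prop) : ℕ :=
  sInf ({d | ∃ u v : Vs, u ≠ v ∧ d = DTpair E u v} ∪
        {d | ∃ u v : Vp, u ≠ v ∧ d = DTpair (fun p s => E s p) u v})

/-- A bipartite graph fails to be a matching iff some vertex has degree at least 2. -/
def NotMatching {Vs Vp : Type*} (E : Vs → Vp → Prop) : Prop :=
  (∃ u : Vs, ∃ p1 p2 : Vp, p1 ≠ p2 ∧ E u p1 ∧ E u p2) ∨
  (∃ p : Vp, ∃ u1 u2 : Vs, u1 ≠ u2 ∧ E u1 p ∧ E u2 p)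

theorem _root_.List.IsSuffix.of_append {α : Type*} {q l₁ l₂ : List α}
    (h : q <:+ l₁ ++ l₂) :
    q <:+ l₂ ∨ ∃ t, t <:+ l₁ ∧ q = t ++ l₂ := by
  obtain ⟨r, hr⟩ := h
  rcases List.append_eq_append_iff.mp hr with ⟨s, rfl, rfl⟩ | ⟨s, rfl, rfl⟩
  · exact Or.inr ⟨s, List.suffix_append _ _, rfl⟩
  · exact Or.inl (List.suffix_append _ _)

theorem _root_.List.IsPrefix.of_append {α : Type*} {q l₁ l₂ : List α}
    (h : q <+: l₁ ++ l₂) :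
    q <+: l₁ ∨ ∃ t, t <+: l₂ ∧ q = l₁ ++ t := by
  obtain ⟨r, hr⟩ := h
  rcases List.append_eq_append_iff.mp hr with ⟨s, rfl, rfl⟩ | ⟨s, rfl, rfl⟩
  · exact Or.inl (List.prefix_append _ _)
  · exact Or.inr ⟨s, List.prefix_append _ _, rfl⟩

theorem _root_.List.IsSuffix.of_replicate_append {α : Type*} {q l : List α} {k : ℕ}
    {a : α} (h : q <:+ List.replicate k a ++ l) (ha : a ∉ q) : q <:+ l := by
  rcases h.of_append with h | ⟨_ | ⟨b, t⟩, ht, rfl⟩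
  · exact h
  · simp
  · have hb : b = a := List.eq_of_mem_replicate (ht.subset List.mem_cons_self)
    simp [hb] at ha

theorem _root_.List.IsPrefix.of_append_replicate {α : Type*} {q l : List α} {k : ℕ}
    {a : α} (h : q <+: l ++ List.replicate k a) (ha : a ∉ q) : q <+: l := by
  rcases h.of_append with h | ⟨_ | ⟨b, t⟩, ht, rfl⟩
  · exact h
  · simp
  · have hb : b = a := List.eq_of_mem_replicate (ht.subset List.mem_cons_self)
    simp [hb] at ha

section Overlaps

variable {α : Type*} {x y : List α} {i : ℕ}

theorem overlapsBy_iff :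
    OverlapsBy x y i ↔ ∃ w : List α, w.length = i ∧ w ≠ [] ∧ w <:+ x ∧ w <+: y := by
  constructor
  · rintro ⟨hi, hmin, heq⟩
    refine ⟨y.take i, by simp; omega, ?_, heq ▸ List.drop_suffix _ _, List.take_prefix _ _⟩
    rw [← List.length_pos_iff]
    simp; omega
  · rintro ⟨w, rfl, hw, hx, hy⟩
    refine ⟨List.length_pos_iff.mpr hw, le_min hx.length_le hy.length_le, ?_⟩
    rw [← List.suffix_iff_eq_drop.mp hx, ← List.prefix_iff_eq_take.mp hy]

theorem overlapsBy_map_iff {β : Type*} {f : α → β} (hf : Function.Injective f) :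
    OverlapsBy (x.map f) (y.map f) i ↔ OverlapsBy x y i := by
  simp only [OverlapsBy, List.length_map, ← List.map_drop, ← List.map_take,
    (List.map_injective_iff.mpr hf).eq_iff]

theorem overlapsBy_tail_dropLast_iff :
    OverlapsBy x.tail y.dropLast i ↔ OverlapsBy x y i ∧ i < min x.length y.length := by
  simp only [OverlapsBy, List.length_tail, List.drop_tail, List.dropLast_eq_take,
    List.length_take, List.take_take]
  constructor
  · rintro ⟨hi, hmin, heq⟩
    rw [show x.length - 1 - i + 1 = x.length - i by omega,
      min_eq_left (by omega : i ≤ y.length - 1)] at heq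
    exact ⟨⟨hi, by omega, heq⟩, by omega⟩
  · rintro ⟨⟨hi, -, heq⟩, hlt⟩
    rw [show x.length - 1 - i + 1 = x.length - i by omega,
      min_eq_left (by omega : i ≤ y.length - 1)]
    exact ⟨hi, by omega, heq⟩

theorem zero_lt_ov_and_ov_lt_iff {r : ℕ} :
    0 < ov x y ∧ ov x y < r ↔ ∃ i < r, OverlapsBy x y i := by
  constructor
  · rintro ⟨hpos, hlt⟩
    have hne : {i | OverlapsBy x y i}.Nonempty := by
      by_contra h
      rw [Set.not_nonempty_iff_eq_empty] at h
      simp [ov, h] at hpos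
    exact ⟨ov x y, hlt, Nat.sInf_mem hne⟩
  · rintro ⟨i, hi, h⟩
    have hov : OverlapsBy x y (ov x y) := Nat.sInf_mem (s := {i | OverlapsBy x y i}) ⟨i, h⟩
    exact ⟨hov.1, (Nat.sInf_le h).trans_lt hi⟩

end Overlaps

theorem IsInjOverlapLabeling.isOverlapLabeling_tail_dropLast {V : Type*} {A : V → V → Prop}
    {r : ℕ} {ℓ : V → List ℕ} (h : IsInjOverlapLabeling A r ℓ) :
    IsOverlapLabeling A (r - 1) (fun u => (ℓ u).tail) (fun v => (ℓ v).dropLast) := by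
  obtain ⟨hlen, -, hA⟩ := h
  refine ⟨fun u => by simp [hlen], fun v => by simp [hlen], fun u v => ?_⟩
  simp only [hA, zero_lt_ov_and_ov_lt_iff, overlapsBy_tail_dropLast_iff, hlen, min_self]
  exact ⟨fun ⟨i, hi, h⟩ => ⟨i, h, hi⟩, fun ⟨i, h, hi⟩ => ⟨i, hi, h⟩⟩

inductive Letter
  | cell (a b : ℕ)
  | padOut
  | padIn
  | sep (v : ℕ)

section Construction
variable (R : ℕ → ℕ → Prop) [DecidableRel R]

/- `inWord R u v` is the word `w(u', v)` of the largest in-neighbour `u' < u` of `v` and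
`outWord R u v` the word `w(u, v')` of the largest out-neighbour `v' < v` of `u` (`[]` if there is
none); `word R u v` is `w(u, v)`. -/
mutual
def inWord : ℕ → ℕ → List Letter
  | 0, _ => []
  | u + 1, v => if R u v then inWord u v ++ .cell u v :: outWord u v else inWord u v
termination_by u v => u + v
def outWord : ℕ → ℕ → List Letter
  | _, 0 => []
  | u, v + 1 => if R u v then inWord u v ++ .cell u v :: outWord u v else outWord u v
termination_by u v => u + v
end

def word (u v : ℕ) : List Letter := inWord R u v ++ .cell u v :: outWord R u v

theorem inWord_zero (v : ℕ) : inWord R 0 v = [] := by rw [inWord]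

theorem inWord_succ (u v : ℕ) :
    inWord R (u + 1) v = if R u v then word R u v else inWord R u v := by
  rw [inWord, word]

theorem outWord_zero (u : ℕ) : outWord R u 0 = [] := by rw [outWord]

theorem outWord_succ (u v : ℕ) :
    outWord R u (v + 1) = if R u v then word R u v else outWord R u v := by
  rw [outWord, word]

variable {R}

theorem inWord_outWord_induction (P : List Letter → Prop) (nil : P [])
    (step : ∀ u v, P (inWord R u v) → P (outWord R u v) → P (word R u v)) (u v : ℕ) :
    P (inWord R u v) ∧ P (outWord R u v) := by
  induction h : u + v using Nat.strong_induction_on generalizing u v with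
  | _ s ih =>
    have hword : ∀ u' v', u' + v' < s → P (word R u' v') := fun u' v' hs =>
      step u' v' (ih _ hs u' v' rfl).1 (ih _ hs u' v' rfl).2
    constructor
    · cases u with
      | zero => rw [inWord_zero]; exact nil
      | succ u =>
        rw [inWord_succ]
        split_ifs
        exacts [hword u v (by omega), (ih _ (by omega) u v rfl).1]
    · cases v with
      | zero => rw [outWord_zero]; exact nil
      | succ v =>
        rw [outWord_succ]
        split_ifs
        exacts [hword u v (by omega), (ih _ (by omega) u v rfl).2]

theorem exists_eq_cell_of_mem_inWord_outWord (u v : ℕ) :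
    (∀ x ∈ inWord R u v, ∃ a b, x = .cell a b) ∧ (∀ x ∈ outWord R u v, ∃ a b, x = .cell a b) :=
  inWord_outWord_induction (fun l => ∀ x ∈ l, ∃ a b, x = .cell a b) (by simp)
    (fun u v hin hout x hx => by
      rcases List.mem_append.mp hx with hx | hx | ⟨_, hx⟩
      exacts [hin x hx, ⟨u, v, rfl⟩, hout x hx]) u v

theorem length_outWord_le_of_cell_cons_suffix {a b u v : ℕ} {t : List Letter}
    (h : .cell a b :: t <:+ outWord R u v) : (outWord R a b).length ≤ t.length := by
  refine (inWord_outWord_induction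
    (fun l => ∀ a b t, .cell a b :: t <:+ l → (outWord R a b).length ≤ t.length) (by simp)
    (fun u v hin hout a b t h => ?_) u v).2 a b t h
  rcases h.of_append with h | ⟨_ | ⟨x, s⟩, hs, hq⟩
  · rcases List.suffix_cons_iff.mp h with h | h
    · simp only [List.cons.injEq, Letter.cell.injEq] at h
      obtain ⟨⟨rfl, rfl⟩, rfl⟩ := h
      exact le_rfl
    · exact hout a b t h
  · simp only [List.nil_append, List.cons.injEq, Letter.cell.injEq] at hq
    obtain ⟨⟨rfl, rfl⟩, rfl⟩ := hq
    exact le_rfl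
  · simp only [List.cons_append, List.cons.injEq] at hq
    obtain ⟨rfl, rfl⟩ := hq
    have := hin a b s hs
    simp only [List.length_append, List.length_cons]
    omega

theorem outWord_eq_nil_or_exists_cell_suffix (u v : ℕ) :
    outWord R u v = [] ∨ ∃ b, [.cell u b] <:+ outWord R u v := by
  induction v with
  | zero => exact Or.inl (outWord_zero R u)
  | succ v ih =>
    rw [outWord_succ]
    split_ifs
    · refine Or.inr ?_
      rcases ih with h | ⟨b, hb⟩
      · exact ⟨v, by simp [word, h]⟩
      · exact ⟨b, hb.trans (List.suffix_append_of_suffix (List.suffix_cons _ _))⟩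
    · exact ih

theorem exists_cell_suffix_word (u v : ℕ) : ∃ b, [.cell u b] <:+ word R u v := by
  rcases outWord_eq_nil_or_exists_cell_suffix (R := R) u v with h | ⟨b, hb⟩
  · exact ⟨v, by simp [word, h]⟩
  · exact ⟨b, hb.trans (List.suffix_append_of_suffix (List.suffix_cons _ _))⟩

theorem outWord_suffix_of_le (u : ℕ) {v w : ℕ} (h : v ≤ w) :
    outWord R u v <:+ outWord R u w := by
  induction w, h using Nat.le_induction with
  | base => exact List.suffix_refl _
  | succ w _ ih =>
    refine ih.trans ?_
    rw [outWord_succ]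
    split_ifs
    · exact List.suffix_append_of_suffix (List.suffix_cons _ _)
    · exact List.suffix_refl _

theorem inWord_prefix_of_le {u m : ℕ} (v : ℕ) (h : u ≤ m) :
    inWord R u v <+: inWord R m v := by
  induction m, h using Nat.le_induction with
  | base => exact List.prefix_refl _
  | succ m _ ih =>
    refine ih.trans ?_
    rw [inWord_succ]
    split_ifs
    · exact List.prefix_append _ _
    · exact List.prefix_refl _

theorem word_suffix_outWord {u v w : ℕ} (h : R u v) (hw : v < w) :
    word R u v <:+ outWord R u w := by
  simpa [outWord_succ, h] using outWord_suffix_of_le (R := R) u hw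

theorem word_prefix_inWord {u v m : ℕ} (h : R u v) (hm : u < m) :
    word R u v <+: inWord R m v := by
  simpa [inWord_succ, h] using inWord_prefix_of_le (R := R) v hm

theorem rel_of_prefix_inWord_of_suffix_outWord {q : List Letter} (hq : q ≠ []) {m v u w : ℕ}
    (hin : q <+: inWord R m v) (hout : q <:+ outWord R u w) : R u v := by
  induction m with
  | zero => exact absurd (List.prefix_nil.mp (inWord_zero R v ▸ hin)) hq
  | succ m ih =>
    rw [inWord_succ] at hin
    split_ifs at hin with hmv
    · rcases hin.of_append with hin | ⟨t, ht, rfl⟩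
      · exact ih hin
      rcases List.prefix_cons_iff.mp ht with rfl | ⟨s, rfl, hs⟩
      · exact ih (by simp)
      have hs' : s = outWord R m v :=
        hs.eq_of_length_le (length_outWord_le_of_cell_cons_suffix
          ((List.suffix_append _ _).trans hout))
      subst hs'
      obtain ⟨b, hb⟩ := exists_cell_suffix_word (R := R) m v
      obtain ⟨b', hb'⟩ := (outWord_eq_nil_or_exists_cell_suffix (R := R) u w).resolve_left
        fun h => hq (List.suffix_nil.mp (h ▸ hout))
      have := (List.suffix_of_suffix_length_le (hb.trans hout) hb' le_rfl).eq_of_length rfl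
      simp only [List.cons.injEq, Letter.cell.injEq] at this
      exact this.1.1 ▸ hmv
    · exact ih hin

variable (R)

def padBound (n : ℕ) : ℕ :=
  ∑ v ∈ Finset.range n, ((inWord R n v).length + (outWord R v n).length)

def inPart (n v : ℕ) : List Letter := (inWord R n v).rightpad (padBound R n) .padIn

def outPart (n u : ℕ) : List Letter := (outWord R u n).leftpad (padBound R n) .padOut

def label (n v : ℕ) : List Letter := inPart R n v ++ .sep v :: outPart R n v

variable {R} {n : ℕ}

theorem length_inWord_le {v : ℕ} (hv : v < n) : (inWord R n v).length ≤ padBound R n :=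
  le_trans (Nat.le_add_right _ _) <| Finset.single_le_sum (f := fun v =>
    (inWord R n v).length + (outWord R v n).length) (fun _ _ => Nat.zero_le _)
    (Finset.mem_range.mpr hv)

theorem length_outWord_le {u : ℕ} (hu : u < n) : (outWord R u n).length ≤ padBound R n :=
  le_trans (Nat.le_add_left _ _) <| Finset.single_le_sum (f := fun v =>
    (inWord R n v).length + (outWord R v n).length) (fun _ _ => Nat.zero_le _)
    (Finset.mem_range.mpr hu)

theorem length_inPart {v : ℕ} (hv : v < n) : (inPart R n v).length = padBound R n := by
  simp [inPart, length_inWord_le hv]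

theorem length_outPart {u : ℕ} (hu : u < n) : (outPart R n u).length = padBound R n := by
  simp [outPart, length_outWord_le hu]

theorem length_label {v : ℕ} (hv : v < n) : (label R n v).length = 2 * padBound R n + 1 := by
  simp [label, length_inPart hv, length_outPart hv]
  omega

theorem label_injective {u v : ℕ} (hu : u < n) (hv : v < n) (h : label R n u = label R n v) :
    u = v := by
  have := (List.append_inj h (by rw [length_inPart hu, length_inPart hv])).2
  simp only [List.cons.injEq, Letter.sep.injEq] at this
  exact this.1

theorem padOut_not_mem_inPart (v : ℕ) : Letter.padOut ∉ inPart R n v := by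
  intro h
  rcases List.mem_append.mp h with h | h
  · simpa using (exists_eq_cell_of_mem_inWord_outWord _ _).1 _ h
  · cases List.eq_of_mem_replicate h

theorem padIn_not_mem_outPart (u : ℕ) : Letter.padIn ∉ outPart R n u := by
  intro h
  rcases List.mem_append.mp h with h | h
  · cases List.eq_of_mem_replicate h
  · simpa using (exists_eq_cell_of_mem_inWord_outWord _ _).2 _ h

theorem sep_not_mem_outPart (u v : ℕ) : Letter.sep v ∉ outPart R n u := by
  intro h
  rcases List.mem_append.mp h with h | h
  · cases List.eq_of_mem_replicate h
  · simpa using (exists_eq_cell_of_mem_inWord_outWord _ _).2 _ h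

theorem rel_of_overlapsBy_label {u v i : ℕ} (hu : u < n) (hv : v < n)
    (h : OverlapsBy (label R n u) (label R n v) i) (hi : i < 2 * padBound R n + 1) : R u v := by
  obtain ⟨w, rfl, hw, hsuf, hpre⟩ := overlapsBy_iff.mp h
  have hout : outPart R n u <:+ label R n u :=
    (List.suffix_cons _ _).trans (List.suffix_append _ _)
  by_cases hlen : w.length ≤ padBound R n
  · have hsuf' : w <:+ outPart R n u :=
      List.suffix_of_suffix_length_le hsuf hout (by rw [length_outPart hu]; exact hlen)
    have hpre' : w <+: inPart R n v :=
      List.prefix_of_prefix_length_le hpre (List.prefix_append _ _)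
        (by rw [length_inPart hv]; exact hlen)
    refine rel_of_prefix_inWord_of_suffix_outWord hw
      (hpre'.of_append_replicate fun h => padIn_not_mem_outPart u (hsuf'.subset h))
      (hsuf'.of_replicate_append fun h => padOut_not_mem_inPart v (hpre'.subset h))
  · exfalso
    rcases hpre.of_append with hpre | ⟨t, ht, rfl⟩
    · exact hlen (hpre.length_le.trans (length_inPart hv).le)
    rcases List.prefix_cons_iff.mp ht with rfl | ⟨s, rfl, -⟩
    · exact hlen (by simp [length_inPart hv])
    have hs : .sep v :: s <:+ outPart R n u := by
      refine List.suffix_of_suffix_length_le ((List.suffix_append _ _).trans hsuf) hout ?_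
      simp only [List.length_append, length_inPart hv] at hi
      rw [length_outPart hu]
      omega
    exact sep_not_mem_outPart u v (hs.subset List.mem_cons_self)

theorem exists_lt_overlapsBy_label_iff {u v : ℕ} (hu : u < n) (hv : v < n) :
    (∃ i < 2 * padBound R n + 1, OverlapsBy (label R n u) (label R n v) i) ↔ R u v := by
  refine ⟨fun ⟨i, hi, h⟩ => rel_of_overlapsBy_label hu hv h hi, fun h => ?_⟩
  have hword : word R u v <:+ outPart R n u :=
    (word_suffix_outWord h hv).trans (List.suffix_append _ _)
  refine ⟨(word R u v).length, ?_,
    overlapsBy_iff.mpr ⟨word R u v, rfl, by simp [word], ?_, ?_⟩⟩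
  · have := hword.length_le
    rw [length_outPart hu] at this
    omega
  · exact hword.trans ((List.suffix_cons _ _).trans (List.suffix_append _ _))
  · exact (word_prefix_inWord h hu).trans
      ((List.prefix_append _ _).trans (List.prefix_append _ _))

end Construction

def Letter.toNat : Letter → ℕ
  | .cell a b => 4 * Nat.pair a b
  | .padOut => 1
  | .padIn => 2
  | .sep v => 4 * v + 3

theorem Letter.toNat_injective : Function.Injective Letter.toNat := by
  rintro (⟨a, b⟩ | _ | _ | v) (⟨a', b'⟩ | _ | _ | v') h <;> simp only [Letter.toNat] at h <;>
    first | rfl | omega | skip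
  · obtain ⟨rfl, rfl⟩ := Nat.pair_eq_pair.mp (by omega : Nat.pair a b = Nat.pair a' b')
    rfl
  · rw [show v = v' by omega]

theorem exists_isInjOverlapLabeling {V : Type*} [Finite V] (A : V → V → Prop) :
    ∃ r ℓ, IsInjOverlapLabeling A r ℓ := by
  classical
  obtain ⟨n, ⟨e⟩⟩ := Finite.exists_equiv_fin V
  have he : Function.Injective fun x => (e x : ℕ) := Fin.val_injective.comp e.injective
  let R : ℕ → ℕ → Prop := fun i j => ∃ x y, (e x : ℕ) = i ∧ (e y : ℕ) = j ∧ A x y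
  have hR : ∀ x y, R (e x) (e y) ↔ A x y := fun x y =>
    ⟨fun ⟨_, _, hx, hy, h⟩ => he hx ▸ he hy ▸ h, fun h => ⟨x, y, rfl, rfl, h⟩⟩
  refine ⟨2 * padBound R n + 1, fun x => (label R n (e x)).map Letter.toNat,
    fun x => by simp [length_label (e x).isLt], fun x y h => ?_, fun x y => ?_⟩
  · exact he (label_injective (e x).isLt (e y).isLt
      (List.map_injective_iff.mpr Letter.toNat_injective h))
  · simp only [zero_lt_ov_and_ov_lt_iff, overlapsBy_map_iff Letter.toNat_injective,
      exists_lt_overlapsBy_label_iff (e x).isLt (e y).isLt, hR]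

/-- For a finite digraph `D = (V, A)` with at least one arc, the bipartite graph
`φ(D)` (parts two copies of `V`, edges `(u_s, v_p)` for `(u,v) ∈ A`) satisfies
`r(φ(D)) ≤ r(D) − 1`, in particular `r(φ(D)) < r(D)`. -/
theorem statement1 {V : Type*} [Fintype V] (A : V → V → Prop) (hA : ∃ u v, A u v) :
    bReadability A ≤ dReadability A - 1 ∧ bReadability A < dReadability A := by
  obtain ⟨r, ℓ, hℓ⟩ := exists_isInjOverlapLabeling A
  obtain ⟨ℓ, hℓ⟩ : dReadability A ∈ {r | ∃ ℓ : V → List ℕ, IsInjOverlapLabeling A r ℓ} :=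
    Nat.sInf_mem ⟨r, ℓ, hℓ⟩
  have hb : bReadability A ≤ dReadability A - 1 :=
    Nat.sInf_le ⟨_, _, hℓ.isOverlapLabeling_tail_dropLast⟩
  obtain ⟨u, v, huv⟩ := hA
  have := (hℓ.2.2 u v).mp huv
  exact ⟨hb, by omega⟩

end Readability
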